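/- Let Y be a separable metric space, κ > 0, and let ν and η be Borel measures on Y with η upper regular by open sets, such that D^κν(y) < ∞ for ν-almost every y ∈ Y. If D^κη(y) > 0 for all y ∈ Y, then ν is absolutely continuous with respect to η. -/

import Mathlib

/-!
Fix levels `M < ⊤` and `δ > 0` and let `A` be the set where `D^κν < M` and `D^κη > δ`. Around each
point of `A` there are arbitrarily small radii `r` with `ν(B(y, r)) ≤ M r^κ` and
`η(B(y, r/5)) ≥ δ (r/5)^κ`. Choosing them inside an open `U ⊇ A`, the Vitali `5r`-covering lemma
gives countably many disjoint balls `B(y, r/5)` whose enlargements `B(y, r)` cover `A`, whence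
`δ ν(A) ≤ 5^κ M η(U)`; upper regularity turns this into `δ ν(A) ≤ 5^κ M η(A)`. Since `D^κη > 0`
everywhere, `ν`-almost all of space is a countable union of such sets `A`.
-/

open scoped ENNReal NNReal
open MeasureTheory Metric Filter Set Topology

/-- A measure is upper regular by open sets if the measure of every set is the infimum of the
measures of open sets containing it. -/
def UpperRegular {Y : Type*} [TopologicalSpace Y] [MeasurableSpace Y] (η : Measure Y) : Prop :=
  ∀ A : Set Y, η A = ⨅ (U : Set Y) (_ : IsOpen U) (_ : A ⊆ U), η U

/-- The lower `κ`-density of a measure at a point. -/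
noncomputable def dens {Y : Type*} [PseudoMetricSpace Y] [MeasurableSpace Y] (κ : ℝ)
    (ν : Measure Y) (y : Y) : ℝ≥0∞ :=
  Filter.liminf (fun r : ℝ => ν (Metric.ball y r) / ENNReal.ofReal (r ^ κ)) (𝓝[>] 0)

lemma UpperRegular.le_mul_of_forall_isOpen {Y : Type*} [TopologicalSpace Y] [MeasurableSpace Y]
    {η : Measure Y} (hreg : UpperRegular η) {A : Set Y} {a c : ℝ≥0∞} (hc : c ≠ ⊤)
    (h : ∀ U, IsOpen U → A ⊆ U → a ≤ c * η U) : a ≤ c * η A := by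
  rcases eq_or_ne c 0 with rfl | hc₀
  · simpa using h univ isOpen_univ (subset_univ A)
  rw [hreg A]
  simp_rw [ENNReal.mul_iInf_of_ne hc₀ hc]
  exact le_iInf₂ fun U hU => le_iInf (h U hU)

lemma exists_countable_pairwiseDisjoint_ball_cover {Y : Type*} [PseudoMetricSpace Y]
    [TopologicalSpace.SeparableSpace Y] (A : Set Y) (r : Y → ℝ) (R : ℝ)
    (hr : ∀ y ∈ A, 0 < r y) (hrR : ∀ y ∈ A, r y ≤ R) :
    ∃ u ⊆ A, u.Countable ∧ u.PairwiseDisjoint (fun b => ball b (r b / 5)) ∧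
      A ⊆ ⋃ b ∈ u, ball b (r b) := by
  obtain ⟨u, huA, hudisj, hucov⟩ :=
    Vitali.exists_disjoint_subfamily_covering_enlargement_closedBall A id (fun y => r y / 5) R
      (fun y hy => by linarith [hr y hy, hrR y hy]) 4 (by norm_num)
  have hdisj : u.PairwiseDisjoint (fun b => ball b (r b / 5)) :=
    hudisj.mono fun _ => ball_subset_closedBall
  refine ⟨u, huA, hdisj.countable_of_isOpen (fun _ _ => isOpen_ball)
    (fun b hb => nonempty_ball.2 (by linarith [hr b (huA hb)])), hdisj, fun a ha => ?_⟩
  obtain ⟨b, hbu, hab⟩ := hucov a ha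
  have ha_mem : a ∈ closedBall a (r a / 5) := mem_closedBall_self (by linarith [hr a ha])
  refine mem_iUnion₂.2 ⟨b, hbu, mem_ball.2 ?_⟩
  calc dist a b ≤ 4 * (r b / 5) := hab ha_mem
    _ < r b := by linarith [hr b (huA hbu)]

section Density

variable {Y : Type*} [PseudoMetricSpace Y] [MeasurableSpace Y] {κ : ℝ} {μ : Measure Y} {y : Y}

lemma frequently_measure_ball_lt_of_dens_lt {M : ℝ≥0∞} (h : dens κ μ y < M) :
    ∃ᶠ r in 𝓝[>] (0 : ℝ), 0 < r ∧ μ (ball y r) < M * ENNReal.ofReal (r ^ κ) := by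
  refine ((frequently_lt_of_liminf_lt (by isBoundedDefault) h).and_eventually
    self_mem_nhdsWithin).mono fun r ⟨hlt, hr⟩ => ⟨hr, ?_⟩
  have hpos : ENNReal.ofReal (r ^ κ) ≠ 0 := (ENNReal.ofReal_pos.2 (Real.rpow_pos_of_pos hr κ)).ne'
  exact (ENNReal.div_lt_iff (Or.inl hpos) (Or.inl ENNReal.ofReal_ne_top)).1 hlt

lemma eventually_lt_measure_ball_of_lt_dens {δ : ℝ≥0∞} (h : δ < dens κ μ y) :
    ∀ᶠ r in 𝓝[>] (0 : ℝ), δ * ENNReal.ofReal (r ^ κ) < μ (ball y r) := by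
  filter_upwards [eventually_lt_of_lt_liminf h, self_mem_nhdsWithin] with r hlt hr
  have hpos : ENNReal.ofReal (r ^ κ) ≠ 0 := (ENNReal.ofReal_pos.2 (Real.rpow_pos_of_pos hr κ)).ne'
  exact (ENNReal.lt_div_iff_mul_lt (Or.inl hpos) (Or.inl ENNReal.ofReal_ne_top)).1 hlt

variable {ν η : Measure Y} {M δ : ℝ≥0∞}

lemma exists_radius_mul_measure_ball_le (hM : dens κ ν y < M) (hδ : δ < dens κ η y)
    {R : ℝ} (hR : 0 < R) :
    ∃ r ∈ Ioo 0 R, δ * ν (ball y r) ≤ M * ENNReal.ofReal (5 ^ κ) * η (ball y (r / 5)) := by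
  have hdiv : Tendsto (fun r : ℝ => r / 5) (𝓝[>] 0) (𝓝[>] 0) :=
    tendsto_nhdsWithin_of_tendsto_nhds_of_eventually_within _
      (((continuous_id.div_const (5 : ℝ)).tendsto' 0 0 (zero_div 5)).mono_left nhdsWithin_le_nhds)
      (eventually_nhdsWithin_of_forall fun r (hr : 0 < r) => div_pos hr (by norm_num))
  obtain ⟨r, ⟨hr, hν⟩, hη, hrR⟩ := ((frequently_measure_ball_lt_of_dens_lt hM).and_eventually
    ((hdiv.eventually (eventually_lt_measure_ball_of_lt_dens hδ)).and
      (Ioo_mem_nhdsGT hR))).exists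
  refine ⟨r, ⟨hr, hrR.2⟩, ?_⟩
  have hscale : ENNReal.ofReal (r ^ κ) = ENNReal.ofReal (5 ^ κ) * ENNReal.ofReal ((r / 5) ^ κ) := by
    rw [← ENNReal.ofReal_mul (by positivity), ← Real.mul_rpow (by norm_num) (by positivity),
      mul_div_cancel₀ r (by norm_num)]
  calc δ * ν (ball y r) ≤ δ * (M * ENNReal.ofReal (r ^ κ)) := by gcongr
    _ = M * ENNReal.ofReal (5 ^ κ) * (δ * ENNReal.ofReal ((r / 5) ^ κ)) := by rw [hscale]; ring
    _ ≤ M * ENNReal.ofReal (5 ^ κ) * η (ball y (r / 5)) := by gcongr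

lemma mul_measure_le_of_dens_lt_of_lt_dens [TopologicalSpace.SeparableSpace Y]
    [OpensMeasurableSpace Y] (hreg : UpperRegular η) (hM : M ≠ ⊤) {A : Set Y}
    (hA : ∀ y ∈ A, dens κ ν y < M ∧ δ < dens κ η y) :
    δ * ν A ≤ M * ENNReal.ofReal (5 ^ κ) * η A := by
  refine hreg.le_mul_of_forall_isOpen (ENNReal.mul_ne_top hM ENNReal.ofReal_ne_top)
    fun U hU hAU => ?_
  have hrad : ∀ y ∈ A, ∃ r ∈ Ioo 0 1, ball y r ⊆ U ∧
      δ * ν (ball y r) ≤ M * ENNReal.ofReal (5 ^ κ) * η (ball y (r / 5)) := by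
    intro y hy
    obtain ⟨ε, hε, hεU⟩ := Metric.isOpen_iff.1 hU y (hAU hy)
    obtain ⟨r, hr, hle⟩ := exists_radius_mul_measure_ball_le (hA y hy).1 (hA y hy).2
      (lt_min hε one_pos)
    exact ⟨r, ⟨hr.1, hr.2.trans_le (min_le_right _ _)⟩,
      (ball_subset_ball (hr.2.trans_le (min_le_left _ _)).le).trans hεU, hle⟩
  choose! r hr hrU hle using hrad
  obtain ⟨u, huA, hu, hdisj, hcov⟩ := exists_countable_pairwiseDisjoint_ball_cover A r 1
    (fun y hy => (hr y hy).1) (fun y hy => (hr y hy).2.le)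
  have hsmallU : ⋃ b ∈ u, ball b (r b / 5) ⊆ U := iUnion₂_subset fun b hb =>
    (ball_subset_ball (by linarith [(hr b (huA hb)).1])).trans (hrU b (huA hb))
  calc δ * ν A ≤ δ * ∑' b : u, ν (ball (b : Y) (r b)) :=
        mul_le_mul_right ((measure_mono hcov).trans (measure_biUnion_le ν hu _)) δ
    _ = ∑' b : u, δ * ν (ball (b : Y) (r b)) := ENNReal.tsum_mul_left.symm
    _ ≤ ∑' b : u, M * ENNReal.ofReal (5 ^ κ) * η (ball (b : Y) (r b / 5)) :=
        ENNReal.tsum_le_tsum fun b => hle b (huA b.2)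
    _ = M * ENNReal.ofReal (5 ^ κ) * η (⋃ b ∈ u, ball b (r b / 5)) := by
        rw [ENNReal.tsum_mul_left, measure_biUnion hu hdisj fun b _ => measurableSet_ball]
    _ ≤ M * ENNReal.ofReal (5 ^ κ) * η U := by gcongr

end Density

theorem absolutelyContinuous_of_density_general {Y : Type*}
    [MetricSpace Y] [TopologicalSpace.SeparableSpace Y] [MeasurableSpace Y] [BorelSpace Y]
    (κ : ℝ) (ν η : Measure Y) (hreg : UpperRegular η)
    (hν : ∀ᵐ y ∂ν, dens κ ν y < ⊤)
    (hη : ∀ y : Y, 0 < dens κ η y) :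
    ν ≪ η := by
  refine Measure.AbsolutelyContinuous.mk fun s _ hηs => ?_
  let E : ℕ → ℕ → Set Y := fun m n => {y | dens κ ν y < m ∧ (n : ℝ≥0∞)⁻¹ < dens κ η y}
  have hcover : s ⊆ {y | ¬ dens κ ν y < ⊤} ∪ ⋃ (m : ℕ) (n : ℕ), s ∩ E m n := by
    intro y hy
    refine or_iff_not_imp_left.2 fun hfin => ?_
    obtain ⟨m, hm⟩ := ENNReal.exists_nat_gt (not_not.1 hfin).ne
    obtain ⟨n, hn⟩ := ENNReal.exists_inv_nat_lt (hη y).ne'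
    exact mem_iUnion₂.2 ⟨m, n, hy, hm, hn⟩
  have hE : ∀ m n : ℕ, ν (s ∩ E m n) = 0 := fun m n => by
    have h := mul_measure_le_of_dens_lt_of_lt_dens hreg (ENNReal.natCast_ne_top m)
      (A := s ∩ E m n) fun y hy => hy.2
    rw [measure_mono_null inter_subset_left hηs, mul_zero, nonpos_iff_eq_zero, mul_eq_zero] at h
    exact h.resolve_left (ENNReal.inv_ne_zero.2 (ENNReal.natCast_ne_top n))
  exact measure_mono_null hcover
    (measure_union_null hν (measure_iUnion_null fun m => measure_iUnion_null (hE m)))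

theorem absolutelyContinuous_of_density {Y : Type*}
    [MetricSpace Y] [TopologicalSpace.SeparableSpace Y] [MeasurableSpace Y] [BorelSpace Y]
    (κ : ℝ) (hκ : 0 < κ) (ν η : Measure Y) (hreg : UpperRegular η)
    (hν : ∀ᵐ y ∂ν, dens κ ν y < ⊤)
    (hη : ∀ y : Y, 0 < dens κ η y) :
    ν ≪ η :=
  absolutelyContinuous_of_density_general κ ν η hreg hν hη
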